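/- Let π ∈ S_n and assume v_i ≤ v_q with i ≤ q, that Next_π(v_i) is not a pinnacle of π, and that Next_π(v_i) < y_{q−1}. Then there exist two balanced reversals transforming π into a permutation π'' such that the only differences between π and π'' are: (i) if Next_π(v_i) > v_q, then Next_π(v_i) is moved immediately before cutD_π(Next_π(v_i), y_{q−1}, v_q), so that Next_π(v_i) ∈ D_{π''}(y_{q−1}, v_q); (ii) if Next_π(v_i) < v_q, then Next_π(v_i) is moved immediately before v_q and becomes the dell v''_q of π''. -/

import Mathlib

/-- The block reversal: reverses the block of `π` between positions `a` and `b`. -/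
def rev (π : ℕ → ℕ) (a b : ℕ) : ℕ → ℕ := fun i =>
  if a ≤ i ∧ i ≤ b then π (a + b - i) else π i

/-- Position `i` holds a pinnacle: `π (i-1) < π i > π (i+1)`. -/
def PinAt (π : ℕ → ℕ) (i : ℕ) : Prop := π (i - 1) < π i ∧ π (i + 1) < π i

/-- Position `i` holds a dell: `π (i-1) > π i < π (i+1)`. -/
def DellAt (π : ℕ → ℕ) (i : ℕ) : Prop := π i < π (i - 1) ∧ π i < π (i + 1)

/-- Position `i` is ascending: its element belongs to an ascending set of `π`. -/
def AscAt (π : ℕ → ℕ) (i : ℕ) : Prop := π (i - 1) < π i ∧ π i < π (i + 1)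

/-- Position `i` is descending: its element belongs to a descending set of `π`. -/
def DescAt (π : ℕ → ℕ) (i : ℕ) : Prop := π i < π (i - 1) ∧ π (i + 1) < π i

/-- The pinnacle set of `π ∈ S_n`, as a finset of values. -/
def pinFinset (n : ℕ) (π : ℕ → ℕ) : Finset ℕ :=
  ((Finset.Icc 1 n).filter fun i => π (i - 1) < π i ∧ π (i + 1) < π i).image π

/-- The reversal with endpoints at positions `a ≤ b` is balanced for `π`:
it does not modify the pinnacle set. -/
def BalancedRev (n : ℕ) (π : ℕ → ℕ) (a b : ℕ) : Prop :=
  pinFinset n (rev π a b) = pinFinset n π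

/-- Apply a sequence of reversals (each given by its pair of positions). -/
def applySeq (π : ℕ → ℕ) : List (ℕ × ℕ) → ℕ → ℕ
  | [] => π
  | ab :: L => applySeq (rev π ab.1 ab.2) L

/-- Every reversal of the sequence is balanced for the permutation to which
it is applied. -/
def IsBalancedSeq (n : ℕ) (π : ℕ → ℕ) : List (ℕ × ℕ) → Prop
  | [] => True
  | ab :: L => 1 ≤ ab.1 ∧ ab.1 ≤ ab.2 ∧ ab.2 ≤ n ∧ BalancedRev n π ab.1 ab.2 ∧
      IsBalancedSeq n (rev π ab.1 ab.2) L

/-- `π` is the extension of a permutation of `{1,…,n}` by the boundary values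
`π 0 = n+1` and `π (n+1) = n+2`. -/
def IsExtPerm (n : ℕ) (π : ℕ → ℕ) : Prop :=
  Set.BijOn π (Set.Icc 1 n) (Set.Icc 1 n) ∧ π 0 = n + 1 ∧ π (n + 1) = n + 2

/-- The positions of the pinnacles of `π`, from left to right. -/
def pinPosList (n : ℕ) (π : ℕ → ℕ) : List ℕ :=
  ((Finset.Icc 1 n).filter fun i => π (i - 1) < π i ∧ π (i + 1) < π i).sort (· ≤ ·)

/-- The positions of the dells of `π`, from left to right. -/
def dellPosList (n : ℕ) (π : ℕ → ℕ) : List ℕ :=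
  ((Finset.Icc 1 n).filter fun i => π i < π (i - 1) ∧ π i < π (i + 1)).sort (· ≤ ·)

/-- The pinnacles `y_1, …, y_p` of `π`, from left to right. -/
def pinList (n : ℕ) (π : ℕ → ℕ) : List ℕ := (pinPosList n π).map π

/-- The dells `v_1, …, v_{p+1}` of `π`, from left to right. -/
def dellList (n : ℕ) (π : ℕ → ℕ) : List ℕ := (dellPosList n π).map π

/-- The position of the dell `v q` (dells are indexed from `1`). -/
def vPos (n : ℕ) (π : ℕ → ℕ) (q : ℕ) : ℕ := (dellPosList n π).getD (q - 1) 0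

/-- The dell `v q`. -/
def vVal (n : ℕ) (π : ℕ → ℕ) (q : ℕ) : ℕ := π (vPos n π q)

/-- The position of the pinnacle `y q`, where `y 0` is at position `0` and
`y (p+1)` is at position `n+1`. -/
def yPos (n : ℕ) (π : ℕ → ℕ) (q : ℕ) : ℕ :=
  if q = 0 then 0 else (pinPosList n π).getD (q - 1) (n + 1)

/-- The pinnacle `y q`, where `y 0 = π 0 = n+1` and `y (p+1) = π (n+1) = n+2`. -/
def yVal (n : ℕ) (π : ℕ → ℕ) (q : ℕ) : ℕ := π (yPos n π q)

/-- The elements of `π` at positions `1, …, n`, read from left to right. -/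
def toList (n : ℕ) (π : ℕ → ℕ) : List ℕ := (List.range n).map fun i => π (i + 1)

/-- The cutpoint `cutA_π(z, v_q, y_q)`: the largest element `e` of
`A_π(v_q, y_q) ∪ {v_q}` such that `e < z`. -/
noncomputable def cutA (n : ℕ) (π : ℕ → ℕ) (q z : ℕ) : ℕ :=
  sSup ((insert (vVal n π q) (π '' Set.Ioo (vPos n π q) (yPos n π q))) ∩ Set.Iio z)

/-- The cutpoint `cutD_π(z, y_{q-1}, v_q)`: the largest element `e` of
`D_π(y_{q-1}, v_q) ∪ {v_q}` such that `e < z`. -/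
noncomputable def cutD (n : ℕ) (π : ℕ → ℕ) (q z : ℕ) : ℕ :=
  sSup ((insert (vVal n π q) (π '' Set.Ioo (yPos n π (q - 1)) (vPos n π q))) ∩ Set.Iio z)

/-- The canonical permutation `Id_S ∈ S_n` (extended by its boundary values):
the elements of `S` in increasing order at positions `2, 4, …, 2|S|`, and the
elements of `{1,…,n} \ S` in increasing order at the remaining positions. -/
def canon (n : ℕ) (S : Finset ℕ) : ℕ → ℕ := fun i =>
  if i = 0 then n + 1
  else if i = n + 1 then n + 2
  else if i ≤ 2 * S.card ∧ i % 2 = 0 then (S.sort (· ≤ ·)).getD (i / 2 - 1) 0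
  else if i ≤ 2 * S.card then (((Finset.Icc 1 n) \ S).sort (· ≤ ·)).getD ((i - 1) / 2) 0
  else (((Finset.Icc 1 n) \ S).sort (· ≤ ·)).getD (i - S.card - 1) 0

/-!
Let `s` be the position of `v_i` and `u = π (s + 1)`; as `u` is not a pinnacle, it sits on an
ascent `π s < u < π (s + 2)`. An entry is moved by two reversals: reverse the block from its old
to its new position, then that block without the moved entry. Each reversal can only change the
pinnacle status near the ends of its block, and there nothing changes: `u` leaves an ascent and
is inserted into a descent, below its larger entry and in front of an entry that is either
smaller than `u` or a dell.

If `u < v_q`, then `u` goes just before `v_q`: it becomes a dell and `v_q` stops being one, while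
the dells further left are those of `π`, so `u` is the new `q`-th dell. If `u > v_q`, then `u`
goes into the descending run from `y_{q-1}` to `v_q` (dells and pinnacles alternate), just before
its first entry below `u`, which is the cutpoint.
-/

section Reversal

open Finset

variable {π : ℕ → ℕ} {n a b : ℕ}

lemma rev_self (π : ℕ → ℕ) (a : ℕ) : rev π a a = π := by
  funext i
  unfold rev
  split_ifs
  · rw [show a + a - i = i by omega]
  · rfl

lemma rev_eq_comp (π : ℕ → ℕ) (a b : ℕ) :
    rev π a b = π ∘ fun i => if a ≤ i ∧ i ≤ b then a + b - i else i := by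
  funext i
  simp only [rev, Function.comp_apply]
  split_ifs <;> rfl

lemma pinFinset_comp_eq {σ : ℕ → ℕ} (hσ : ∀ j ∈ Icc 1 n, σ j ∈ Icc 1 n)
    (hσσ : ∀ j ∈ Icc 1 n, σ (σ j) = j) (hpin : ∀ j ∈ Icc 1 n, PinAt (π ∘ σ) j ↔ PinAt π (σ j)) :
    pinFinset n (π ∘ σ) = pinFinset n π := by
  unfold pinFinset
  rw [← image_image]
  congr 1
  ext y
  simp only [mem_image, mem_filter]
  constructor
  · rintro ⟨j, ⟨hj, hpinj⟩, rfl⟩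
    exact ⟨hσ j hj, (hpin j hj).1 hpinj⟩
  · rintro ⟨hy, hpiny⟩
    refine ⟨σ y, ⟨hσ y hy, (hpin _ (hσ y hy)).2 ?_⟩, hσσ y hy⟩
    rwa [hσσ y hy]

lemma balancedRev_of_boundary (ha : 1 ≤ a) (hab : a < b) (hb : b ≤ n)
    (h₁ : 2 ≤ a → (PinAt (rev π a b) (a - 1) ↔ PinAt π (a - 1)))
    (h₂ : PinAt (rev π a b) a ↔ PinAt π b) (h₃ : PinAt (rev π a b) b ↔ PinAt π a)
    (h₄ : b < n → (PinAt (rev π a b) (b + 1) ↔ PinAt π (b + 1))) :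
    BalancedRev n π a b := by
  unfold BalancedRev
  rw [rev_eq_comp]
  refine pinFinset_comp_eq (fun j hj => ?_) (fun j hj => ?_) (fun j hj => ?_) <;>
    simp only [mem_Icc] at hj ⊢
  · split_ifs <;> omega
  · split_ifs <;> omega
  · rw [← rev_eq_comp]
    obtain h | h | h | h | h | h | h : j + 1 < a ∨ j + 1 = a ∨ j = a ∨ (a < j ∧ j < b) ∨
        j = b ∨ j = b + 1 ∨ b + 1 < j := by omega
    · rw [if_neg (by omega)]
      simp only [PinAt, rev]
      grind
    · rw [if_neg (by omega)]
      simpa [← h] using h₁ (by omega)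
    · rw [if_pos (by omega), h, show a + b - a = b by omega]
      exact h₂
    · rw [if_pos (by omega)]
      simp only [PinAt, rev]
      grind
    · rw [if_pos (by omega), h, show a + b - b = a by omega]
      exact h₃
    · rw [if_neg (by omega), h]
      exact h₄ (by omega)
    · rw [if_neg (by omega)]
      simp only [PinAt, rev]
      grind

lemma balancedRev_self (n : ℕ) (π : ℕ → ℕ) (a : ℕ) : BalancedRev n π a a := by
  rw [BalancedRev, rev_self]

end Reversal

def moveRight (s d : ℕ) : List (ℕ × ℕ) := [(s, d), (s, d - 1)]

def moveLeft (t s : ℕ) : List (ℕ × ℕ) := [(t, s), (t + 1, s)]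

section Moves

variable {π : ℕ → ℕ} {n s d t : ℕ}

lemma applySeq_moveRight (j : ℕ) :
    applySeq π (moveRight s d) j =
      if j < s ∨ d < j then π j else if j = d then π s else π (j + 1) := by
  simp only [moveRight, applySeq, rev]
  grind

lemma applySeq_moveLeft (j : ℕ) :
    applySeq π (moveLeft t s) j =
      if j < t ∨ s < j then π j else if j = t then π s else π (j - 1) := by
  simp only [moveLeft, applySeq, rev]
  grind

lemma applySeq_moveRight_self (hsd : s ≤ d) : applySeq π (moveRight s d) d = π s := by
  rw [applySeq_moveRight, if_neg (by omega), if_pos rfl]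

lemma applySeq_moveLeft_self (hts : t ≤ s) : applySeq π (moveLeft t s) t = π s := by
  rw [applySeq_moveLeft, if_neg (by omega), if_pos rfl]

lemma descAt_moveRight (hsd : s < d) (hlt : π (d + 1) < π s) (hgt : π s < π d) :
    DescAt (applySeq π (moveRight s d)) d := by
  unfold DescAt
  simp only [applySeq_moveRight]
  grind

lemma descAt_moveLeft (hts : t < s) (hlt : π t < π s) (hgt : π s < π (t - 1)) :
    DescAt (applySeq π (moveLeft t s)) t := by
  unfold DescAt
  simp only [applySeq_moveLeft]
  grind

lemma dellAt_moveRight_iff (hasc : AscAt π s) (hdesc : π (d + 1) < π d) (hlt : π s < π d)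
    {j : ℕ} (hj : j < d) :
    DellAt (applySeq π (moveRight s d)) j ↔ DellAt π (if j < s then j else j + 1) := by
  unfold AscAt at hasc
  simp only [DellAt, applySeq_moveRight]
  grind

lemma isBalancedSeq_moveRight (hs : 1 ≤ s) (hsd : s < d) (hd : d ≤ n) (hasc : AscAt π s)
    (hdesc : π (d + 1) < π d) (hlt : π s < π d)
    (hnp : ¬ (π s < π (d + 1) ∧ π (d + 2) < π (d + 1))) :
    IsBalancedSeq n π (moveRight s d) := by
  unfold AscAt at hasc
  refine ⟨hs, hsd.le, hd, ?_, hs, by omega, by omega, ?_, trivial⟩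
  · apply balancedRev_of_boundary hs hsd hd <;> simp only [PinAt, rev] <;> grind
  · rcases (show s ≤ d - 1 by omega).eq_or_lt with h | h
    · rw [← h]
      exact balancedRev_self n _ s
    · apply balancedRev_of_boundary hs h (by omega) <;> simp only [PinAt, rev] <;> grind

lemma isBalancedSeq_moveLeft (ht : 1 ≤ t) (hts : t < s) (hs : s ≤ n) (hasc : AscAt π s)
    (hlt : π t < π s) (hgt : π s < π (t - 1)) :
    IsBalancedSeq n π (moveLeft t s) := by
  unfold AscAt at hasc
  refine ⟨ht, hts.le, hs, ?_, by omega, by omega, hs, ?_, trivial⟩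
  · apply balancedRev_of_boundary ht hts hs <;> simp only [PinAt, rev] <;> grind
  · rcases (show t + 1 ≤ s by omega).eq_or_lt with h | h
    · rw [← h]
      exact balancedRev_self n _ _
    · apply balancedRev_of_boundary (by omega) h hs <;> simp only [PinAt, rev] <;> grind

end Moves
section ListView

variable {π : ℕ → ℕ} {n s d t : ℕ}

lemma range'_append_range' {a k b : ℕ} (h : a + k = b) (l : ℕ) :
    List.range' a k ++ List.range' b l = List.range' a (k + l) :=
  h ▸ List.range'_append_1

lemma map_range'_shift (f : ℕ → ℕ) (a k : ℕ) :
    (List.range' a k).map (fun j => f (j + 1)) = (List.range' (a + 1) k).map f := by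
  rw [add_comm a 1, ← List.map_add_range', List.map_map]
  exact List.map_congr_left fun j _ => by rw [Function.comp_apply, add_comm]

lemma map_range'_congr {f g : ℕ → ℕ} {a k : ℕ} (h : ∀ j, a ≤ j → j < a + k → f j = g j) :
    (List.range' a k).map f = (List.range' a k).map g :=
  List.map_congr_left fun j hj => h j (List.mem_range'_1.1 hj).1 (List.mem_range'_1.1 hj).2

lemma toList_eq_append (f : ℕ → ℕ) {a b : ℕ} (ha : 1 ≤ a) (hab : a ≤ b + 1) (hb : b ≤ n) :
    toList n f = (List.range' 1 (a - 1)).map f ++ (List.range' a (b + 1 - a)).map f ++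
      (List.range' (b + 1) (n - b)).map f := by
  have hsplit : List.range' 1 (a - 1) ++ List.range' a (b + 1 - a) ++
      List.range' (b + 1) (n - b) = List.range' 1 n := by
    rw [range'_append_range' (show 1 + (a - 1) = a by omega),
      range'_append_range' (show 1 + (a - 1 + (b + 1 - a)) = b + 1 by omega)]
    congr 1
    omega
  rw [← List.map_append, ← List.map_append, hsplit, _root_.toList, List.range'_eq_map_range,
    List.map_map]
  exact List.map_congr_left fun j _ => by rw [Function.comp_apply, add_comm]

lemma not_mem_map_range' (hinj : Set.InjOn π (Set.Icc 1 n)) {a k : ℕ} (ha : 1 ≤ a)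
    (hs : s ∈ Set.Icc 1 n) (hk : a + k ≤ n + 1) (hsk : s < a ∨ a + k ≤ s) :
    π s ∉ (List.range' a k).map π := by
  simp only [List.mem_map, List.mem_range'_1, not_exists, not_and]
  intro j hj he
  have := hinj (Set.mem_Icc.2 ⟨by omega, by omega⟩) hs he
  omega

lemma toList_moveRight (hinj : Set.InjOn π (Set.Icc 1 n)) (hs : 1 ≤ s) (hsd : s ≤ d)
    (hd : d < n) :
    ∃ l₁ l₂, (toList n π).erase (π s) = l₁ ++ π (d + 1) :: l₂ ∧
      toList n (applySeq π (moveRight s d)) = l₁ ++ π s :: π (d + 1) :: l₂ := by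
  refine ⟨(List.range' 1 (s - 1)).map π ++ (List.range' (s + 1) (d - s)).map π,
    (List.range' (d + 2) (n - (d + 1))).map π, ?_, ?_⟩
  · rw [toList_eq_append π hs (show s ≤ d + 1 + 1 by omega) (show d + 1 ≤ n by omega),
      show d + 1 + 1 - s = d - s + 1 + 1 by omega, List.range'_succ, List.range'_1_concat,
      List.map_cons, List.erase_append_left _ (List.mem_append_right _ (List.mem_cons_self ..)),
      List.erase_append_right _ (not_mem_map_range' hinj (by omega) ⟨hs, by omega⟩ (by omega)
        (by omega)), List.erase_cons_head, show s + 1 + (d - s) = d + 1 by omega]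
    simp
  · have hσ := applySeq_moveRight (π := π) (s := s) (d := d)
    have hleft : (List.range' 1 (s - 1)).map (applySeq π (moveRight s d)) =
        (List.range' 1 (s - 1)).map π :=
      map_range'_congr fun j _ hj => by rw [hσ, if_pos (by omega)]
    have hmid : (List.range' s (d - s)).map (applySeq π (moveRight s d)) =
        (List.range' (s + 1) (d - s)).map π := by
      rw [← map_range'_shift]
      exact map_range'_congr fun j hj hj' => by rw [hσ, if_neg (by omega), if_neg (by omega)]
    have hright : (List.range' (d + 2) (n - (d + 1))).map (applySeq π (moveRight s d)) =
        (List.range' (d + 2) (n - (d + 1))).map π :=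
      map_range'_congr fun j hj _ => by rw [hσ, if_pos (by omega)]
    rw [toList_eq_append _ hs (show s ≤ d + 1 + 1 by omega) (show d + 1 ≤ n by omega),
      show d + 1 + 1 - s = d - s + 1 + 1 by omega, List.range'_1_concat, List.range'_1_concat,
      show s + (d - s) = d by omega, show s + (d - s + 1) = d + 1 by omega,
      show d + 1 + 1 = d + 2 by omega]
    simp [hleft, hmid, hright, hσ, show ¬ d < s by omega]

lemma toList_moveLeft (hinj : Set.InjOn π (Set.Icc 1 n)) (ht : 1 ≤ t) (hts : t < s)
    (hs : s ≤ n) :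
    ∃ l₁ l₂, (toList n π).erase (π s) = l₁ ++ π t :: l₂ ∧
      toList n (applySeq π (moveLeft t s)) = l₁ ++ π s :: π t :: l₂ := by
  refine ⟨(List.range' 1 (t - 1)).map π,
    (List.range' (t + 1) (s - t - 1)).map π ++ (List.range' (s + 1) (n - s)).map π, ?_, ?_⟩
  · have hts' : π t ≠ π s := fun h => by
      have := hinj ⟨ht, by omega⟩ ⟨by omega, hs⟩ h
      omega
    rw [toList_eq_append π ht (show t ≤ s + 1 by omega) hs,
      show s + 1 - t = s - t - 1 + 1 + 1 by omega, List.range'_succ, List.range'_1_concat,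
      show t + 1 + (s - t - 1) = s by omega]
    simp only [List.map_cons, List.map_append, List.map_nil, List.append_assoc, List.cons_append,
      List.nil_append]
    rw [List.erase_append_right _ (not_mem_map_range' hinj (by omega) ⟨by omega, hs⟩ (by omega)
        (by omega)), List.erase_cons_tail (by simpa using hts'),
      List.erase_append_right _ (not_mem_map_range' hinj (by omega) ⟨by omega, hs⟩ (by omega)
        (by omega)), List.erase_cons_head]
  · have hσ := applySeq_moveLeft (π := π) (t := t) (s := s)
    have hleft : (List.range' 1 (t - 1)).map (applySeq π (moveLeft t s)) =
        (List.range' 1 (t - 1)).map π :=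
      map_range'_congr fun j _ hj => by rw [hσ, if_pos (by omega)]
    have hmid : (List.range' (t + 1) (s - t)).map (applySeq π (moveLeft t s)) =
        (List.range' t (s - t)).map π := by
      rw [← map_range'_shift]
      exact map_range'_congr fun j _ hj => by
        rw [hσ, if_neg (by omega), if_neg (by omega), Nat.add_sub_cancel]
    have hright : (List.range' (s + 1) (n - s)).map (applySeq π (moveLeft t s)) =
        (List.range' (s + 1) (n - s)).map π :=
      map_range'_congr fun j hj _ => by rw [hσ, if_pos (by omega)]
    rw [toList_eq_append _ ht (show t ≤ s + 1 by omega) hs, show s + 1 - t = s - t + 1 by omega,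
      List.range'_succ, List.map_cons, hleft, hmid, hright, hσ, if_neg (by omega), if_pos rfl,
      show s - t = s - t - 1 + 1 by omega, List.range'_succ]
    simp

end ListView

section SortedFinset

open Finset

variable {α : Type*} [LinearOrder α] {F : Finset α} {j k : ℕ} {x : α}

lemma sort_getD_eq_orderEmbOfFin (hk : k < #F) (d : α) :
    (F.sort (· ≤ ·)).getD k d = F.orderEmbOfFin rfl ⟨k, hk⟩ := by
  rw [List.getD_eq_getElem _ _ (by rwa [length_sort]), orderEmbOfFin_apply]
  rfl

lemma sort_getD_mem (hk : k < #F) (d : α) : (F.sort (· ≤ ·)).getD k d ∈ F := by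
  rw [sort_getD_eq_orderEmbOfFin hk]
  exact orderEmbOfFin_mem F rfl _

lemma sort_getD_le_sort_getD (hjk : j ≤ k) (hk : k < #F) (d : α) :
    (F.sort (· ≤ ·)).getD j d ≤ (F.sort (· ≤ ·)).getD k d := by
  rw [sort_getD_eq_orderEmbOfFin (hjk.trans_lt hk), sort_getD_eq_orderEmbOfFin hk]
  exact (F.orderEmbOfFin rfl).monotone (Fin.mk_le_mk.2 hjk)

lemma card_filter_lt_orderEmbOfFin (i : Fin #F) : #{y ∈ F | y < F.orderEmbOfFin rfl i} = i := by
  set e := F.orderEmbOfFin rfl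
  have himage : {y ∈ F | y < e i} = (Iio i).map e.toEmbedding := by
    ext y
    simp only [mem_filter, mem_map, mem_Iio, RelEmbedding.coe_toEmbedding]
    constructor
    · rintro ⟨hy, hlt⟩
      obtain ⟨j, rfl⟩ : y ∈ Set.range e := by rwa [range_orderEmbOfFin]
      exact ⟨j, e.lt_iff_lt.1 hlt, rfl⟩
    · rintro ⟨j, hj, rfl⟩
      exact ⟨orderEmbOfFin_mem F rfl j, e.lt_iff_lt.2 hj⟩
  rw [himage, card_map, Fin.card_Iio]

lemma card_filter_lt_sort_getD (hk : k < #F) (d : α) :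
    #{y ∈ F | y < (F.sort (· ≤ ·)).getD k d} = k := by
  rw [sort_getD_eq_orderEmbOfFin hk, card_filter_lt_orderEmbOfFin]

lemma sort_getD_eq_of_card_filter_lt (hx : x ∈ F) (hcard : #{y ∈ F | y < x} = k) (d : α) :
    (F.sort (· ≤ ·)).getD k d = x := by
  obtain ⟨i, rfl⟩ : x ∈ Set.range (F.orderEmbOfFin rfl) := by rwa [range_orderEmbOfFin]
  rw [card_filter_lt_orderEmbOfFin] at hcard
  subst hcard
  exact sort_getD_eq_orderEmbOfFin i.2 d

lemma card_filter_lt_lt_card_filter_lt (hx : x ∈ F) {a b : α} (hax : a ≤ x) (hxb : x < b) :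
    #{y ∈ F | y < a} < #{y ∈ F | y < b} := by
  refine card_lt_card ((ssubset_iff_of_subset fun y hy => ?_).2 ⟨x, ?_, ?_⟩)
  · simp only [mem_filter] at hy ⊢
    exact ⟨hy.1, hy.2.trans (hax.trans_lt hxb)⟩
  · simp [hx, hxb]
  · simp only [mem_filter, not_and, not_lt]
    exact fun _ => hax

lemma card_filter_lt_succ (F : Finset ℕ) (x : ℕ) :
    #{y ∈ F | y < x + 1} = #{y ∈ F | y < x} + if x ∈ F then 1 else 0 := by
  split_ifs with hx
  · have hinsert : {y ∈ F | y < x + 1} = insert x {y ∈ F | y < x} := by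
      ext y
      simp only [mem_filter, mem_insert]
      grind
    rw [hinsert, card_insert_of_notMem (by simp)]
  · rw [add_zero]
    congr 1
    ext y
    simp only [mem_filter]
    grind

end SortedFinset

def dellPos (n : ℕ) (π : ℕ → ℕ) : Finset ℕ :=
  (Finset.Icc 1 n).filter fun i => π i < π (i - 1) ∧ π i < π (i + 1)

def pinPos (n : ℕ) (π : ℕ → ℕ) : Finset ℕ :=
  (Finset.Icc 1 n).filter fun i => π (i - 1) < π i ∧ π (i + 1) < π i

section Alternation

open Finset

variable {n : ℕ} {π : ℕ → ℕ} {i q x : ℕ}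

lemma mem_dellPos : i ∈ dellPos n π ↔ (1 ≤ i ∧ i ≤ n) ∧ DellAt π i := by
  simp [dellPos, DellAt]

lemma mem_pinPos : i ∈ pinPos n π ↔ (1 ≤ i ∧ i ≤ n) ∧ PinAt π i := by
  simp [pinPos, PinAt]

lemma length_dellPosList : (dellPosList n π).length = #(dellPos n π) :=
  length_sort _

lemma vPos_eq_sort_getD (n : ℕ) (π : ℕ → ℕ) (q : ℕ) :
    vPos n π q = ((dellPos n π).sort (· ≤ ·)).getD (q - 1) 0 :=
  rfl

lemma yPos_eq_sort_getD (n : ℕ) (π : ℕ → ℕ) (hq : q ≠ 0) :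
    yPos n π q = ((pinPos n π).sort (· ≤ ·)).getD (q - 1) (n + 1) :=
  if_neg hq

lemma yPos_zero (n : ℕ) (π : ℕ → ℕ) : yPos n π 0 = 0 :=
  if_pos rfl

/-- Reading `π` from left to right, dells and pinnacles alternate, starting with a dell. -/
lemma card_dellPos_filter_lt_succ (hne : ∀ j ≤ n, π j ≠ π (j + 1)) (h0 : π 1 < π 0)
    (hx : x ≤ n) :
    #{i ∈ dellPos n π | i < x + 1} =
      #{i ∈ pinPos n π | i < x + 1} + if π x < π (x + 1) then 1 else 0 := by
  induction x with
  | zero =>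
    have hD : {i ∈ dellPos n π | i < 1} = ∅ := filter_eq_empty_iff.2 fun i hi => by
      have := (mem_dellPos.1 hi).1.1
      omega
    have hP : {i ∈ pinPos n π | i < 1} = ∅ := filter_eq_empty_iff.2 fun i hi => by
      have := (mem_pinPos.1 hi).1.1
      omega
    rw [hD, hP, if_neg (by simpa using h0.asymm)]
    rfl
  | succ x ih =>
    have hD : x + 1 ∈ dellPos n π ↔ π (x + 1) < π x ∧ π (x + 1) < π (x + 1 + 1) := by
      simp only [mem_dellPos, DellAt, Nat.add_sub_cancel]
      omega
    have hP : x + 1 ∈ pinPos n π ↔ π x < π (x + 1) ∧ π (x + 1 + 1) < π (x + 1) := by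
      simp only [mem_pinPos, PinAt, Nat.add_sub_cancel]
      omega
    have hih := ih (by omega)
    have hne₁ := hne x (by omega)
    have hne₂ := hne (x + 1) hx
    rw [card_filter_lt_succ, card_filter_lt_succ (pinPos n π), if_congr hD rfl rfl,
      if_congr hP rfl rfl]
    split_ifs at hih ⊢ <;> omega

end Alternation

namespace IsExtPerm

open Finset

variable {n : ℕ} {π : ℕ → ℕ} {j s q : ℕ}

lemma injOn (hπ : IsExtPerm n π) : Set.InjOn π (Set.Iic (n + 1)) := by
  obtain ⟨hbij, h0, hn1⟩ := hπ
  intro j hj k hk he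
  simp only [Set.mem_Iic] at hj hk
  have hvj : j ∈ Set.Icc 1 n → π j ∈ Set.Icc 1 n := fun h => hbij.mapsTo h
  have hvk : k ∈ Set.Icc 1 n → π k ∈ Set.Icc 1 n := fun h => hbij.mapsTo h
  by_cases hj' : j ∈ Set.Icc 1 n <;> by_cases hk' : k ∈ Set.Icc 1 n
  · exact hbij.injOn hj' hk' he
  all_goals simp only [Set.mem_Icc] at hj' hk' hvj hvk; grind

lemma apply_ne_apply_succ (hπ : IsExtPerm n π) (hj : j ≤ n) : π j ≠ π (j + 1) := fun h => by
  have := hπ.injOn (Set.mem_Iic.2 (by omega)) (Set.mem_Iic.2 (by omega)) h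
  omega

lemma apply_le (hπ : IsExtPerm n π) (hj : j ≤ n) : π j ≤ n + 1 := by
  rcases Nat.eq_zero_or_pos j with rfl | hj0
  · exact hπ.2.1.le
  · exact (hπ.1.mapsTo ⟨hj0, hj⟩ : π j ∈ Set.Icc 1 n).2.trans n.le_succ

lemma apply_one_lt_apply_zero (hπ : IsExtPerm n π) (hn : 1 ≤ n) : π 1 < π 0 := by
  rw [hπ.2.1]
  exact Nat.lt_succ_of_le (hπ.1.mapsTo ⟨le_rfl, hn⟩ : π 1 ∈ Set.Icc 1 n).2

lemma card_pinPos_add_one (hπ : IsExtPerm n π) (hn : 1 ≤ n) :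
    #(pinPos n π) + 1 = #(dellPos n π) := by
  have h := card_dellPos_filter_lt_succ (n := n) (π := π) (fun j hj => hπ.apply_ne_apply_succ hj)
    (hπ.apply_one_lt_apply_zero hn) le_rfl
  rw [if_pos (by rw [hπ.2.2]; have := hπ.apply_le (le_refl n); omega)] at h
  rw [filter_true_of_mem fun i hi => Nat.lt_succ_of_le (mem_dellPos.1 hi).1.2,
    filter_true_of_mem fun i hi => Nat.lt_succ_of_le (mem_pinPos.1 hi).1.2] at h
  exact h.symm

lemma yPos_spec (hπ : IsExtPerm n π) (hq : 1 ≤ q) (hqD : q ≤ #(dellPos n π)) :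
    yPos n π (q - 1) ≤ n ∧ π (yPos n π (q - 1) + 1) < π (yPos n π (q - 1)) ∧
      #{i ∈ dellPos n π | i < yPos n π (q - 1) + 1} = q - 1 := by
  have hn : 1 ≤ n := by
    obtain ⟨i, hi⟩ := card_pos.1 (by omega : 0 < #(dellPos n π))
    exact (mem_dellPos.1 hi).1.1.trans (mem_dellPos.1 hi).1.2
  rcases (show q = 1 ∨ 2 ≤ q by omega) with rfl | hq2
  · rw [Nat.sub_self, yPos_zero]
    refine ⟨Nat.zero_le n, hπ.apply_one_lt_apply_zero hn, ?_⟩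
    rw [card_eq_zero, filter_eq_empty_iff]
    intro i hi
    have := (mem_dellPos.1 hi).1.1
    omega
  · have hqP : q - 2 < #(pinPos n π) := by
      have := hπ.card_pinPos_add_one hn
      omega
    rw [yPos_eq_sort_getD n π (by omega), show q - 1 - 1 = q - 2 by omega]
    obtain ⟨⟨-, hgn⟩, hgpin⟩ := mem_pinPos.1 (sort_getD_mem hqP (n + 1))
    have hcount := card_dellPos_filter_lt_succ (n := n) (π := π)
      (fun j hj => hπ.apply_ne_apply_succ hj) (hπ.apply_one_lt_apply_zero hn) hgn
    rw [card_filter_lt_succ (pinPos n π), card_filter_lt_sort_getD hqP,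
      if_pos (sort_getD_mem hqP _), if_neg hgpin.2.asymm] at hcount
    exact ⟨hgn, hgpin.2, by omega⟩

lemma yPos_lt_vPos_and_strictAntiOn (hπ : IsExtPerm n π) (hq : 1 ≤ q)
    (hqD : q ≤ #(dellPos n π)) :
    yPos n π (q - 1) < vPos n π q ∧
      StrictAntiOn π (Set.Icc (yPos n π (q - 1)) (vPos n π q)) := by
  obtain ⟨-, hgdesc, hgcount⟩ := hπ.yPos_spec hq hqD
  set g := yPos n π (q - 1)
  set p := vPos n π q
  have hqD' : q - 1 < #(dellPos n π) := by omega
  have hpD : p ∈ dellPos n π := sort_getD_mem hqD' 0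
  have hpcount : #{i ∈ dellPos n π | i < p} = q - 1 := card_filter_lt_sort_getD hqD' 0
  -- `g + 1` and `p` are preceded by the same number of dells, and `p` is one.
  have hgp : g < p := by
    by_contra h
    have := card_filter_lt_lt_card_filter_lt hpD le_rfl (show p < g + 1 by omega)
    omega
  have hnodell : ∀ d ∈ dellPos n π, g < d → p ≤ d := fun d hd hgd => by
    by_contra h
    have := card_filter_lt_lt_card_filter_lt hd (show g + 1 ≤ d by omega) (not_le.1 h)
    omega
  have hpn := (mem_dellPos.1 hpD).1.2
  have hdesc : ∀ j, g ≤ j → j < p → π (j + 1) < π j := by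
    intro j hgj
    induction j, hgj using Nat.le_induction with
    | base => exact fun _ => hgdesc
    | succ j hgj ih =>
      intro hjp
      have hj := ih (by omega)
      refine ((hπ.apply_ne_apply_succ (j := j + 1) (by omega)).lt_or_gt).resolve_left
        fun h => ?_
      have := hnodell (j + 1) (mem_dellPos.2 ⟨⟨by omega, by omega⟩, by simpa using hj, h⟩)
        (by omega)
      omega
  refine ⟨hgp, strictAntiOn_of_succ_lt Set.ordConnected_Icc fun j _ hj hj' => ?_⟩
  simp only [Order.succ_eq_add_one, Set.mem_Icc] at hj hj' ⊢
  exact hdesc j hj.1 (by omega)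

lemma ascAt_succ (hπ : IsExtPerm n π) (hs : s ∈ dellPos n π) (hsn : s < n)
    (hpin : π (s + 1) ∉ pinFinset n π) : AscAt π (s + 1) := by
  obtain ⟨-, hdell⟩ := mem_dellPos.1 hs
  refine ⟨by simpa using hdell.2, ?_⟩
  refine (hπ.apply_ne_apply_succ (j := s + 1) hsn).lt_or_gt.resolve_right fun h => hpin ?_
  exact mem_image_of_mem π (mem_pinPos.2 ⟨⟨by omega, hsn⟩, by simpa using hdell.2, h⟩)

end IsExtPerm

lemma exists_sSup_image_inter_Iio_eq {f : ℕ → ℕ} {g p u : ℕ} (hgp : g < p)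
    (hf : StrictAntiOn f (Set.Icc g p)) (hpu : f p < u) (hug : u < f g)
    (hu : ∀ j ∈ Set.Ioo g p, f j ≠ u) :
    ∃ t ∈ Set.Ioc g p, sSup (insert (f p) (f '' Set.Ioo g p) ∩ Set.Iio u) = f t ∧
      f t < u ∧ u < f (t - 1) := by
  classical
  have hex : ∃ t, g < t ∧ t ≤ p ∧ f t < u := ⟨p, hgp, le_rfl, hpu⟩
  obtain ⟨hgt, htp, htu⟩ := Nat.find_spec hex
  have hmin : ∀ j, g < j → j ≤ p → f j < u → Nat.find hex ≤ j := fun j h₁ h₂ h₃ =>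
    Nat.find_min' hex ⟨h₁, h₂, h₃⟩
  have hanti : ∀ j ∈ Set.Icc g p, Nat.find hex ≤ j → f j ≤ f (Nat.find hex) := fun j hj hjt =>
    hf.antitoneOn ⟨hgt.le, htp⟩ hj hjt
  refine ⟨Nat.find hex, ⟨hgt, htp⟩, IsGreatest.csSup_eq ⟨⟨?_, htu⟩, ?_⟩, htu, ?_⟩
  · rcases htp.eq_or_lt with h | h
    · rw [h]
      exact Set.mem_insert _ _
    · exact Set.mem_insert_of_mem _ ⟨_, ⟨hgt, h⟩, rfl⟩
  · rintro y ⟨hy | ⟨j, hj, rfl⟩, hyu⟩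
    · exact hy ▸ hanti p ⟨hgp.le, le_rfl⟩ htp
    · exact hanti j ⟨hj.1.le, hj.2.le⟩ (hmin j hj.1 hj.2.le hyu)
  · rcases (show Nat.find hex - 1 = g ∨ g < Nat.find hex - 1 by omega) with h | h
    · rwa [h]
    · have hle := hmin (Nat.find hex - 1) h (by omega)
      have hne := hu (Nat.find hex - 1) ⟨h, by omega⟩
      by_contra hlt
      exact absurd (hle (lt_of_le_of_ne (not_lt.1 hlt) hne)) (by omega)

section Cases

open Finset

variable {n : ℕ} {π : ℕ → ℕ} {s d q : ℕ}

/-- No dell of `π` sits at the ascent `s` or at the descent `d`, so the dells of the new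
permutation to the left of `d` are those of `π` to the left of `d + 1`, shifted. -/
lemma vVal_moveRight (hs : 1 ≤ s) (hsd : s < d) (hasc : AscAt π s) (hlt : π s < π (d + 1))
    (hdesc : π (d + 1) < π d) (hq : 1 ≤ q) (hqD : q ≤ #(dellPos n π))
    (hp : vPos n π q = d + 1) :
    vVal n (applySeq π (moveRight s d)) q = π s := by
  have hqD' : q - 1 < #(dellPos n π) := by omega
  have hpD : d + 1 ∈ dellPos n π := by
    rw [← hp]
    exact sort_getD_mem hqD' 0
  have hcount : #{i ∈ dellPos n π | i < d + 1} = q - 1 := by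
    rw [← hp]
    exact card_filter_lt_sort_getD hqD' 0
  have hdn := (mem_dellPos.1 hpD).1.2
  have hsd' : π s < π d := hlt.trans hdesc
  have hsnot : ¬ DellAt π s := fun h => h.1.not_gt hasc.1
  have hdnot : ¬ DellAt π d := fun h => h.2.not_gt hdesc
  have hdσ : d ∈ dellPos n (applySeq π (moveRight s d)) := by
    refine mem_dellPos.2 ⟨⟨by omega, by omega⟩, ?_⟩
    unfold DellAt
    simp only [applySeq_moveRight]
    grind
  have hcountσ : #{i ∈ dellPos n (applySeq π (moveRight s d)) | i < d} = q - 1 := by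
    rw [← hcount]
    refine card_nbij' (fun j => if j < s then j else j + 1) (fun e => if e < s then e else e - 1)
      ?_ ?_ ?_ ?_
    · intro j hj
      simp only [mem_coe, mem_filter, mem_dellPos] at hj ⊢
      refine ⟨⟨⟨by split_ifs <;> omega, by split_ifs <;> omega⟩,
        (dellAt_moveRight_iff hasc hdesc hsd' hj.2).1 hj.1.2⟩, by split_ifs <;> omega⟩
    · intro e he
      simp only [mem_coe, mem_filter, mem_dellPos] at he ⊢
      have hes : e ≠ s := fun h => hsnot (h ▸ he.1.2)
      have hed : e ≠ d := fun h => hdnot (h ▸ he.1.2)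
      have hed' : (if e < s then e else e - 1) < d := by split_ifs <;> omega
      refine ⟨⟨⟨by split_ifs <;> omega, by omega⟩,
        (dellAt_moveRight_iff hasc hdesc hsd' hed').2 ?_⟩, hed'⟩
      convert he.1.2 using 2
      split_ifs <;> omega
    · intro j _
      dsimp only
      split_ifs <;> omega
    · intro e he
      have hes : e ≠ s := fun h => hsnot (h ▸ (mem_dellPos.1 (mem_filter.1 he).1).2)
      dsimp only
      split_ifs <;> omega
  rw [vVal, vPos_eq_sort_getD, sort_getD_eq_of_card_filter_lt hdσ hcountσ,
    applySeq_moveRight_self hsd.le]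

lemma exists_isBalancedSeq_move_before_vVal (hπ : IsExtPerm n π) (hq : 1 ≤ q)
    (hqD : q ≤ #(dellPos n π)) (hasc : AscAt π (s + 1))
    (hsp : s ≤ vPos n π q) (hup : π (s + 1) < vVal n π q) :
    ∃ L : List (ℕ × ℕ), IsBalancedSeq n π L ∧ L.length = 2 ∧
      (∃ l₁ l₂, (toList n π).erase (π (s + 1)) = l₁ ++ vVal n π q :: l₂ ∧
        toList n (applySeq π L) = l₁ ++ π (s + 1) :: vVal n π q :: l₂) ∧
      vVal n (applySeq π L) q = π (s + 1) := by
  have hpD : vPos n π q ∈ dellPos n π := sort_getD_mem (by omega) 0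
  obtain ⟨⟨hp1, hpn⟩, hpdell⟩ := mem_dellPos.1 hpD
  obtain ⟨d, hd⟩ : ∃ d, vPos n π q = d + 1 := ⟨vPos n π q - 1, by omega⟩
  have hv : vVal n π q = π (d + 1) := by rw [vVal, hd]
  rw [hv] at hup ⊢
  rw [hd] at hsp hpn hpdell
  have hsd : s + 1 < d := by
    obtain ⟨hpdell₁, hpdell₂⟩ := hpdell
    simp only [Nat.add_sub_cancel] at hpdell₁
    by_contra h
    obtain rfl | rfl | rfl : s = d + 1 ∨ s = d ∨ s + 1 = d := by omega
    all_goals omega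
  refine ⟨moveRight (s + 1) d, isBalancedSeq_moveRight (by omega) hsd (by omega) hasc
      (by simpa using hpdell.1) (hup.trans (by simpa using hpdell.1)) (fun h => ?_), rfl,
    toList_moveRight hπ.1.injOn (by omega) hsd.le (by omega),
    vVal_moveRight (by omega) hsd hasc hup (by simpa using hpdell.1) hq hqD hd⟩
  exact h.2.not_gt hpdell.2

lemma exists_isBalancedSeq_move_before_cutD (hπ : IsExtPerm n π) (hq : 1 ≤ q)
    (hqD : q ≤ #(dellPos n π)) (hsD : s ∈ dellPos n π) (hsn : s < n) (hasc : AscAt π (s + 1))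
    (hsp : s ≤ vPos n π q) (hpu : vVal n π q < π (s + 1))
    (huy : π (s + 1) < yVal n π (q - 1)) :
    ∃ L : List (ℕ × ℕ), IsBalancedSeq n π L ∧ L.length = 2 ∧
      (∃ l₁ l₂, (toList n π).erase (π (s + 1)) = l₁ ++ cutD n π q (π (s + 1)) :: l₂ ∧
        toList n (applySeq π L) = l₁ ++ π (s + 1) :: cutD n π q (π (s + 1)) :: l₂) ∧
      ∃ c, 1 ≤ c ∧ c ≤ n ∧ applySeq π L c = π (s + 1) ∧ DescAt (applySeq π L) c := by
  obtain ⟨hgp, hanti⟩ := hπ.yPos_lt_vPos_and_strictAntiOn hq hqD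
  have hpn : vPos n π q ≤ n := (mem_dellPos.1 (sort_getD_mem (by omega) 0)).1.2
  -- `v_i` is a dell, so it lies before the descending run from `y_{q-1}` to `v_q`.
  have hsg : s < vPos n π q → s + 1 < yPos n π (q - 1) := fun hsp' => by
    have hsdell := (mem_dellPos.1 hsD).2.2
    by_contra h
    rcases (show s + 1 = yPos n π (q - 1) ∨ yPos n π (q - 1) ≤ s by omega) with h' | h'
    · rw [yVal, ← h'] at huy
      exact lt_irrefl _ huy
    · have := hanti ⟨h', by omega⟩ ⟨by omega, by omega⟩ (show s < s + 1 by omega)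
      omega
  have hune : ∀ j ∈ Set.Ioo (yPos n π (q - 1)) (vPos n π q), π j ≠ π (s + 1) :=
    fun j ⟨hgj, hjp⟩ he => by
      have := hπ.injOn (Set.mem_Iic.2 (by omega)) (Set.mem_Iic.2 (by omega)) he
      rcases hsp.eq_or_lt with h | h
      · omega
      · have := hsg h
        omega
  obtain ⟨t, ⟨hgt, htp⟩, hcut, htu, hut⟩ :=
    exists_sSup_image_inter_Iio_eq hgp hanti hpu huy hune
  change cutD n π q (π (s + 1)) = π t at hcut
  rw [hcut]
  rcases hsp.eq_or_lt with hsp | hsp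
  · refine ⟨moveLeft t (s + 1), isBalancedSeq_moveLeft (by omega) (by omega) (by omega) hasc
      htu hut, rfl, toList_moveLeft hπ.1.injOn (by omega) (by omega) (by omega), t, by omega,
      by omega, applySeq_moveLeft_self (by omega), descAt_moveLeft (by omega) htu hut⟩
  · have hsg := hsg hsp
    obtain ⟨d, rfl⟩ : ∃ d, t = d + 1 := ⟨t - 1, by omega⟩
    simp only [Nat.add_sub_cancel] at hut
    have hdesc : π (d + 1) < π d := hanti ⟨by omega, by omega⟩ ⟨by omega, by omega⟩ (by omega)
    refine ⟨moveRight (s + 1) d, isBalancedSeq_moveRight (by omega) (by omega) (by omega) hasc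
      hdesc hut (fun h => h.1.not_gt htu), rfl,
      toList_moveRight hπ.1.injOn (by omega) (by omega) (by omega), d, by omega, by omega,
      applySeq_moveRight_self (by omega), descAt_moveRight (by omega) htu hut⟩

end Cases

theorem statement16_general (n : ℕ) (π : ℕ → ℕ) (hπ : IsExtPerm n π)
    (i q : ℕ) (hi : 1 ≤ i) (hiq : i ≤ q) (hq : q ≤ (dellPosList n π).length)
    (u : ℕ) (hu : u = π (vPos n π i + 1))
    (hupin : u ∉ pinFinset n π)
    (huyq : u < yVal n π (q - 1)) :
    ∃ L : List (ℕ × ℕ), IsBalancedSeq n π L ∧ L.length = 2 ∧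
      (vVal n π q < u →
        (∃ l₁ l₂, (toList n π).erase u = l₁ ++ cutD n π q u :: l₂ ∧
          toList n (applySeq π L) = l₁ ++ u :: cutD n π q u :: l₂) ∧
        ∃ c, 1 ≤ c ∧ c ≤ n ∧ applySeq π L c = u ∧ DescAt (applySeq π L) c) ∧
      (u < vVal n π q →
        (∃ l₁ l₂, (toList n π).erase u = l₁ ++ vVal n π q :: l₂ ∧
          toList n (applySeq π L) = l₁ ++ u :: vVal n π q :: l₂) ∧
        vVal n (applySeq π L) q = u) := by
  rw [length_dellPosList] at hq
  have hqD : q - 1 < (dellPos n π).card := by omega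
  have hsD : vPos n π i ∈ dellPos n π := sort_getD_mem (by omega) 0
  have hpD : vPos n π q ∈ dellPos n π := sort_getD_mem hqD 0
  have hsp : vPos n π i ≤ vPos n π q := sort_getD_le_sort_getD (by omega) hqD 0
  have hsn : vPos n π i < n := by
    have := hπ.apply_le (hπ.yPos_spec (by omega) hq).1
    refine (mem_dellPos.1 hsD).1.2.lt_of_ne fun hs => ?_
    rw [hu, hs, hπ.2.2, yVal] at huyq
    omega
  subst hu
  have hasc := hπ.ascAt_succ hsD hsn hupin
  rcases lt_trichotomy (π (vPos n π i + 1)) (vVal n π q) with hup | hup | hpu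
  · obtain ⟨L, hL, hlen, hconc⟩ :=
      exists_isBalancedSeq_move_before_vVal hπ (by omega) hq hasc hsp hup
    exact ⟨L, hL, hlen, fun h => absurd h hup.asymm, fun _ => hconc⟩
  · have hpn := (mem_dellPos.1 hpD).1.2
    rw [← hπ.injOn (Set.mem_Iic.2 (by omega)) (Set.mem_Iic.2 (by omega)) hup] at hpD
    exact absurd (mem_dellPos.1 hpD).2.1 hasc.1.asymm
  · obtain ⟨L, hL, hlen, hconc⟩ :=
      exists_isBalancedSeq_move_before_cutD hπ (by omega) hq hsD hsn hasc hsp hpu huyq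
    exact ⟨L, hL, hlen, fun _ => hconc, fun h => absurd h hpu.asymm⟩

/-- Lemma 4.5. Assume `v_i ≤ v_q` with `i ≤ q`, and that
`u = Next π v_i` is not a pinnacle and satisfies `u < y_{q-1}`. Then two
balanced reversals transform `π` into `π''` whose only difference with `π` is:
(i) if `u > v_q`, `u` is moved immediately before `cutD_π(u, y_{q-1}, v_q)` — so
that `u` lies in the descending set `D_{π''}(y_{q-1}, v_q)`;
(ii) if `u < v_q`, `u` is moved immediately before `v_q` and becomes the dell
`v''_q` of `π''`. -/
theorem statement16 (n : ℕ) (π : ℕ → ℕ) (hπ : IsExtPerm n π)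
    (i q : ℕ) (hi : 1 ≤ i) (hiq : i ≤ q) (hq : q ≤ (dellPosList n π).length)
    (hvv : vVal n π i ≤ vVal n π q)
    (u : ℕ) (hu : u = π (vPos n π i + 1))
    (hupin : u ∉ pinFinset n π)
    (huyq : u < yVal n π (q - 1)) :
    ∃ L : List (ℕ × ℕ), IsBalancedSeq n π L ∧ L.length = 2 ∧
      (vVal n π q < u →
        (∃ l₁ l₂, (toList n π).erase u = l₁ ++ cutD n π q u :: l₂ ∧
          toList n (applySeq π L) = l₁ ++ u :: cutD n π q u :: l₂) ∧
        ∃ c, 1 ≤ c ∧ c ≤ n ∧ applySeq π L c = u ∧ DescAt (applySeq π L) c) ∧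
      (u < vVal n π q →
        (∃ l₁ l₂, (toList n π).erase u = l₁ ++ vVal n π q :: l₂ ∧
          toList n (applySeq π L) = l₁ ++ u :: vVal n π q :: l₂) ∧
        vVal n (applySeq π L) q = u) :=
  statement16_general n π hπ i q hi hiq hq u hu hupin huyq
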